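/- If z is exceptional, x ⪰ z, and x ≠ z (as sorted vectors), then B(x) > m(z). Consequently, for any move x → x' to an exceptional position x', one has B(x) = m(x') + 1. -/

import Mathlib

/-- `z` is a basic position with parameter `b`: coordinate sum `k*b`, all coordinates
at most `b`, all coordinates even if `b` is even, exactly one even if `b` is odd. -/
def IsBasic (k : ℕ) (z : Fin (k+1) → ℕ) (b : ℕ) : Prop :=
  (∑ i, z i) = k * b ∧ (∀ i, z i ≤ b) ∧
    (Even b → ∀ i, Even (z i)) ∧ (Odd b → ∃! i, Even (z i))

/-- `Pre k y x` means `y ⪯ x`: the sorted vector of `y` is componentwise ≤ that of `x`. -/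
def Pre (k : ℕ) (y x : Fin (k+1) → ℕ) : Prop :=
  ∀ i, (y ∘ Tuple.sort y) i ≤ (x ∘ Tuple.sort x) i

/-- `BVal k x = max { b : some basic z with parameter b satisfies z ⪯ x }`. -/
noncomputable def BVal (k : ℕ) (x : Fin (k+1) → ℕ) : ℕ :=
  sSup {b | ∃ z, IsBasic k z b ∧ Pre k z x}

/-- A move in NIM(k+1,k): keep coordinate `i`, decrease every other (positive) coordinate by 1. -/
def MoveK (k : ℕ) (x y : Fin (k+1) → ℕ) : Prop :=
  ∃ i, (∀ j, j ≠ i → 0 < x j) ∧ ∀ j, y j = if j = i then x j else x j - 1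

/-- The M-move: keep a smallest even coordinate if one exists, otherwise keep a
largest coordinate; decrease the other k (positive) coordinates by 1. -/
def MMove (k : ℕ) (x y : Fin (k+1) → ℕ) : Prop :=
  ∃ i, (∀ j, j ≠ i → 0 < x j) ∧
    ((∃ j, Even (x j)) → Even (x i) ∧ ∀ j, Even (x j) → x i ≤ x j) ∧
    ((∀ j, Odd (x j)) → ∀ j, x j ≤ x i) ∧
    (∀ j, y j = if j = i then x j else x j - 1)

/-- Exceptional position: all coordinates odd, all `< m`, and `|x| = k*m + k - 1`
for some even `m`. -/
def Exceptional (k : ℕ) (x : Fin (k+1) → ℕ) : Prop :=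
  ∃ m, Even m ∧ (∀ i, Odd (x i)) ∧ (∀ i, x i < m) ∧ (∑ i, x i) = k * m + k - 1

/-- `MVal k x m`: playing the M-rule from `x`, the game ends after exactly `m` moves. -/
inductive MVal (k : ℕ) : (Fin (k+1) → ℕ) → ℕ → Prop
  | zero (x) : (¬ ∃ y, MoveK k x y) → MVal k x 0
  | succ (x y m) : MMove k x y → MVal k y m → MVal k x (m + 1)

/-!
Sort `z` and `x` increasingly. If `z ⪯ x` but not `x ⪯ z`, take the last place `i` where the
sorted `z` is strictly below the sorted `x`; past `i` the sorted `z` is strictly larger than at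
`i`, so raising it by one at `i` keeps it sorted and still below `x`. Since all coordinates of
the exceptional `z` are odd and `|z| = k m + k - 1`, the raised vector is basic with parameter
`m + 1`, so `B(x) > m`. A move from `x` to an exceptional `x'` lowers the coordinates pointwise and
the sum by `k`, so `x' ⪯ x` and not conversely, while `|x| = k(m' + 2) - 1` bounds every basic
parameter below `x` by `m' + 1`.
-/

theorem Tuple.comp_sort_le_comp_sort {α : Type*} [LinearOrder α] {n : ℕ} {f g : Fin n → α}
    (h : f ≤ g) : f ∘ Tuple.sort f ≤ g ∘ Tuple.sort g := by
  intro j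
  set G := g ∘ Tuple.sort g
  -- `j < #{i | G i ≤ G j}` characterises the `j`-th smallest value, and these counts are
  -- invariant under sorting and can only grow when `g` is lowered to `f`.
  have hcount : (j : ℕ) < Fintype.card {i // (f ∘ Tuple.sort f) i ≤ G j} :=
    calc (j : ℕ) < Fintype.card {i // G i ≤ G j} := by
          rw [Fintype.card_subtype]
          exact (Tuple.lt_card_le_iff_apply_le_of_monotone (Tuple.monotone_sort g)).2 le_rfl
      _ = Fintype.card {i // g i ≤ G j} :=
          Fintype.card_congr ((Tuple.sort g).subtypeEquiv fun _ => Iff.rfl)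
      _ ≤ Fintype.card {i // f i ≤ G j} :=
          Fintype.card_subtype_mono _ _ fun i hi => (h i).trans hi
      _ = Fintype.card {i // (f ∘ Tuple.sort f) i ≤ G j} :=
          (Fintype.card_congr ((Tuple.sort f).subtypeEquiv fun _ => Iff.rfl)).symm
  rw [Fintype.card_subtype] at hcount
  exact (Tuple.lt_card_le_iff_apply_le_of_monotone (Tuple.monotone_sort f)).1 hcount

theorem Monotone.update_add_one {n : ℕ} {f : Fin n → ℕ} (hf : Monotone f) {i : Fin n}
    (hi : ∀ j, i < j → f i < f j) : Monotone (Function.update f i (f i + 1)) := by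
  intro a b hab
  rcases eq_or_ne a i with rfl | ha <;> rcases eq_or_ne b a with rfl | hb
  · exact le_rfl
  · simpa [hb] using hi b (lt_of_le_of_ne hab (Ne.symm hb))
  · simp
  · rcases eq_or_ne b i with rfl | hbi
    · simpa [ha] using (hf hab).trans (Nat.le_succ _)
    · simpa [ha, hbi] using hf hab

/-- The last index `i` with `f i < g i`: past it `f` dominates the monotone `g`. -/
theorem exists_lt_and_forall_lt_of_monotone {α : Type*} [LinearOrder α] {n : ℕ} {f g : Fin n → α} (hg : Monotone g)
    (h : ∃ i, f i < g i) : ∃ i, f i < g i ∧ ∀ j, i < j → f i < f j := by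
  classical
  set s := Finset.univ.filter fun i => f i < g i
  have hs : s.Nonempty := by simpa [s, Finset.filter_nonempty_iff] using h
  refine ⟨s.max' hs, by simpa [s] using s.max'_mem hs, fun j hj => ?_⟩
  have hgj : g j ≤ f j := not_lt.1 fun hlt => (s.le_max' j (by simpa [s] using hlt)).not_gt hj
  exact ((by simpa [s] using s.max'_mem hs : f (s.max' hs) < g (s.max' hs)).trans_le
    (hg hj.le)).trans_le hgj

section Positions

variable {k : ℕ}

theorem pre_of_le {y x : Fin (k+1) → ℕ} (h : ∀ i, y i ≤ x i) : Pre k y x :=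
  Tuple.comp_sort_le_comp_sort h

theorem pre_of_monotone {w x : Fin (k+1) → ℕ} (hw : Monotone w)
    (h : ∀ i, w i ≤ (x ∘ Tuple.sort x) i) : Pre k w x := by
  intro i
  rw [Tuple.sort_eq_refl_iff_monotone.2 hw]
  exact h i

theorem Pre.sum_le {y x : Fin (k+1) → ℕ} (h : Pre k y x) : ∑ i, y i ≤ ∑ i, x i := by
  calc ∑ i, y i = ∑ i, (y ∘ Tuple.sort y) i := (Equiv.sum_comp _ _).symm
    _ ≤ ∑ i, (x ∘ Tuple.sort x) i := Finset.sum_le_sum fun i _ => h i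
    _ = ∑ i, x i := Equiv.sum_comp _ _

theorem IsBasic.le_bVal (hk : 0 < k) {w x : Fin (k+1) → ℕ} {b : ℕ} (hw : IsBasic k w b)
    (hwx : Pre k w x) : b ≤ BVal k x := by
  have hbdd : BddAbove {b | ∃ z, IsBasic k z b ∧ Pre k z x} := by
    refine ⟨∑ i, x i, fun b ⟨z, hz, hzx⟩ => ?_⟩
    calc b ≤ k * b := Nat.le_mul_of_pos_left b hk
      _ = ∑ i, z i := hz.1.symm
      _ ≤ ∑ i, x i := hzx.sum_le
  exact le_csSup hbdd ⟨w, hw, hwx⟩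

theorem bVal_le_of_sum_lt {x : Fin (k+1) → ℕ} {n : ℕ} (h : ∑ i, x i < k * (n + 1)) :
    BVal k x ≤ n := by
  refine csSup_le' fun b ⟨w, hw, hwx⟩ => ?_
  have : k * b < k * (n + 1) := hw.1 ▸ hwx.sum_le.trans_lt h
  exact Nat.lt_succ_iff.1 (Nat.lt_of_mul_lt_mul_left this)

theorem isBasic_update_add_one (hk : 0 < k) {z : Fin (k+1) → ℕ} {m : ℕ} (hm : Even m)
    (hodd : ∀ i, Odd (z i)) (hlt : ∀ i, z i < m) (hsum : ∑ i, z i = k * m + k - 1)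
    (i : Fin (k+1)) : IsBasic k (Function.update z i (z i + 1)) (m + 1) := by
  refine ⟨?_, fun j => ?_, fun h => absurd h (by simpa [Nat.even_add_one] using hm),
    fun _ => ⟨i, by simpa using (hodd i).add_one, fun j hj => ?_⟩⟩
  · rw [Finset.sum_update_of_mem (Finset.mem_univ i), ← Finset.add_sum_erase _ _
      (Finset.mem_univ i), Finset.sdiff_singleton_eq_erase] at *
    have : 0 < k * m + k := by positivity
    rw [Nat.mul_succ]
    omega
  · rcases eq_or_ne j i with rfl | hj
    · simpa using (hlt j).le
    · simpa [hj] using (hlt j).le.trans (Nat.le_succ m)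
  · by_contra hji
    exact (Nat.not_even_iff_odd.2 (hodd j)) (by simpa [hji] using hj)

theorem lt_bVal_of_exceptional (hk : 0 < k) {x z : Fin (k+1) → ℕ} {m : ℕ} (hm : Even m)
    (hodd : ∀ i, Odd (z i)) (hlt : ∀ i, z i < m) (hsum : ∑ i, z i = k * m + k - 1)
    (hzx : Pre k z x) (hxz : ¬ Pre k x z) : m < BVal k x := by
  set Z := z ∘ Tuple.sort z
  set X := x ∘ Tuple.sort x
  have hgap : ∃ i, Z i < X i := by
    simp only [Pre, not_forall, not_le] at hxz
    exact hxz
  obtain ⟨i, hi, hZi⟩ := exists_lt_and_forall_lt_of_monotone (Tuple.monotone_sort x) hgap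
  have hbasic : IsBasic k (Function.update Z i (Z i + 1)) (m + 1) :=
    isBasic_update_add_one hk hm (fun _ => hodd _) (fun _ => hlt _)
      (by rw [Equiv.sum_comp (Tuple.sort z) z, hsum]) i
  have hpre : Pre k (Function.update Z i (Z i + 1)) x := by
    refine pre_of_monotone ((Tuple.monotone_sort z).update_add_one hZi) fun j => ?_
    rcases eq_or_ne j i with rfl | hj
    · simpa using hi
    · rw [Function.update_of_ne hj]
      exact hzx j
  exact Nat.lt_of_succ_le (hbasic.le_bVal hk hpre)

theorem MoveK.le {x x' : Fin (k+1) → ℕ} (h : MoveK k x x') (j : Fin (k+1)) : x' j ≤ x j := by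
  obtain ⟨i, -, hx'⟩ := h
  rw [hx' j]
  split <;> omega

theorem MoveK.sum_eq {x x' : Fin (k+1) → ℕ} (h : MoveK k x x') :
    ∑ j, x j = ∑ j, x' j + k := by
  obtain ⟨i, hpos, hx'⟩ := h
  have hx : ∀ j, x j = x' j + if j = i then 0 else 1 := fun j => by
    rw [hx' j]
    split_ifs with hj
    · rfl
    · have := hpos j hj; omega
  simp [hx, Finset.sum_add_distrib, Finset.sum_ite, Finset.filter_ne']

theorem bVal_eq_of_moveK_exceptional (hk : 0 < k) {x x' : Fin (k+1) → ℕ} {m' : ℕ}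
    (hmove : MoveK k x x') (hm' : Even m') (hodd : ∀ i, Odd (x' i)) (hlt : ∀ i, x' i < m')
    (hsum : ∑ i, x' i = k * m' + k - 1) : BVal k x = m' + 1 := by
  have hxsum := hmove.sum_eq
  have hnpre : ¬ Pre k x x' := fun h => by have := h.sum_le; omega
  have hlow := lt_bVal_of_exceptional hk hm' hodd hlt hsum (pre_of_le hmove.le) hnpre
  have hup : BVal k x ≤ m' + 1 := bVal_le_of_sum_lt <| by
    rw [hxsum, hsum, Nat.mul_add, Nat.mul_add]
    omega
  omega

end Positions

theorem stmt12 (k : ℕ) (hk : 2 ≤ k) :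
    (∀ (x z : Fin (k+1) → ℕ) (m : ℕ), Even m → (∀ i, Odd (z i)) →
      (∀ i, z i < m) → (∑ i, z i) = k * m + k - 1 →
      Pre k z x → ¬ Pre k x z → m < BVal k x) ∧
    (∀ (x x' : Fin (k+1) → ℕ) (m' : ℕ), MoveK k x x' → Even m' →
      (∀ i, Odd (x' i)) → (∀ i, x' i < m') → (∑ i, x' i) = k * m' + k - 1 →
      BVal k x = m' + 1) := by
  have hk0 : 0 < k := by omega
  exact ⟨fun _ _ _ => lt_bVal_of_exceptional hk0, fun _ _ _ => bVal_eq_of_moveK_exceptional hk0⟩
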